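/- Let G be a p-group of maximal class of order p^m (m ≥ 4) with positive degree of commutativity, possessing an abelian maximal subgroup. Then α_{G,n} = (1/p^m)(p · p^{mn} + (p^m − p^{m−1}) · p^{2n} + (p^{m−1} − p) · p^{(m−1)n}). -/

import Mathlib

/-- The simultaneous conjugation relation on `n`-tuples of elements of `G`. -/
def simulConjRel (G : Type*) [Group G] (n : ℕ) (x y : Fin n → G) : Prop :=
  ∃ g : G, ∀ i, g * x i * g⁻¹ = y i

/-- `α_{G,n}`: the number of orbits of `G` acting on `Gⁿ` by simultaneous conjugation. -/
noncomputable def alphaCount (G : Type*) [Group G] (n : ℕ) : ℕ :=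
  Nat.card (Quot (simulConjRel G n))

/-- Commuting `n`-tuples in `G`. -/
def CommTuple (G : Type*) [Group G] (n : ℕ) :=
  {x : Fin n → G // ∀ i j, Commute (x i) (x j)}

/-- `β_{G,n}`: the number of orbits of `G` acting on commuting `n`-tuples by
simultaneous conjugation. -/
noncomputable def betaCount (G : Type*) [Group G] (n : ℕ) : ℕ :=
  Nat.card (Quot (fun x y : CommTuple G n => simulConjRel G n x.1 y.1))

/-- The series `P_0 = G`, `P_1` the 2-step centralizer, `P_i = γ_i(G)` for `i ≥ 2`
(note `γ_i(G) = lowerCentralSeries G (i-1)` in Mathlib's indexing). -/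
def maximalClassP (G : Type*) [Group G] (P1 : Subgroup G) : ℕ → Subgroup G :=
  fun i => if i = 0 then ⊤ else if i = 1 then P1 else Subgroup.lowerCentralSeries (⊤ : Subgroup G) (i - 1)

set_option maxHeartbeats 1000000


lemma comm_of_gen {G : Type*} [Group G] {S : Set G}
    (hS : Subgroup.closure S = ⊤) (h : ∀ a ∈ S, ∀ b ∈ S, Commute a b)
    (x y : G) : Commute x y := by
  have hx : x ∈ Subgroup.closure S := hS ▸ Subgroup.mem_top x
  have hy : y ∈ Subgroup.closure S := hS ▸ Subgroup.mem_top y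
  induction hx, hy using Subgroup.closure_induction₂ with
  | mem => exact h _ ‹_› _ ‹_›
  | one_left => exact Commute.one_left _
  | one_right => exact Commute.one_right _
  | mul_left a b c _ _ _ ha hb => exact ha.mul_left hb
  | mul_right a b c _ _ _ ha hb => exact ha.mul_right hb
  | inv_left a b _ _ ha => exact ha.inv_left
  | inv_right a b _ _ ha => exact ha.inv_right

section Struct
variable {p m : ℕ} [Fact p.Prime] {G : Type*} [Group G] [Finite G] [Group.IsNilpotent G]

open Subgroup
open scoped commutatorElement

lemma centralizer_cards
    (hG : Nat.card G = p ^ m) (hm : 4 ≤ m)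
    (hclass : Group.nilpotencyClass G = m - 1)
    {A : Subgroup G} (hAi : A.index = p) (hAc : IsMulCommutative A) :
    Nat.card (Subgroup.center G) = p ∧
    (Subgroup.center G ≤ A) ∧
    (∀ a : G, a ∈ A → a ∉ Subgroup.center G →
      Nat.card (Subgroup.centralizer ({a} : Set G)) = p ^ (m - 1)) ∧
    (∀ s : G, s ∉ A → Nat.card (Subgroup.centralizer ({s} : Set G)) = p ^ 2) := by
  classical
  have hp : p.Prime := Fact.out
  have hp1 : 1 < p := hp.one_lt
  have hpG : IsPGroup p G := IsPGroup.of_card hG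
  have hGnt : Nontrivial G := by
    rw [← Finite.one_lt_card_iff_nontrivial, hG]
    exact Nat.one_lt_pow (by omega) hp1
  -- card A
  have hAcard : Nat.card A = p ^ (m - 1) := by
    have h1 : Nat.card A * A.index = Nat.card G := Subgroup.card_mul_index A
    rw [hAi, hG] at h1
    have : p ^ m = p ^ (m - 1) * p := by
      rw [← pow_succ]; congr 1; omega
    rw [this] at h1
    exact Nat.eq_of_mul_eq_mul_right (by omega) h1
  have hAne : A ≠ ⊤ := by
    intro h
    rw [h, Subgroup.index_top] at hAi
    exact hp.one_lt.ne hAi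
  -- A is a coatom
  have hmax : IsCoatom A := by
    refine ⟨hAne, fun B hB => ?_⟩
    have h1 : A.relIndex B * B.index = A.index := Subgroup.relIndex_mul_index hB.le
    rw [hAi] at h1
    rcases (Nat.dvd_prime hp).mp (Dvd.intro_left _ h1) with h2 | h2
    · exact Subgroup.index_eq_one.mp h2
    · exfalso
      rw [h2] at h1
      have h3 : A.relIndex B = 1 :=
        Nat.eq_of_mul_eq_mul_right (by omega : 0 < p) (h1.trans (one_mul p).symm)
      exact hB.not_ge (Subgroup.relIndex_eq_one.mp h3)
  have hnorm : A.Normal :=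
    Subgroup.NormalizerCondition.normal_of_coatom A normalizerCondition_of_isNilpotent hmax
  -- generation by A and any outside element
  have hgen : ∀ s : G, s ∉ A → Subgroup.closure ((A : Set G) ∪ {s}) = ⊤ := by
    intro s hs
    have h1 : Subgroup.closure ((A : Set G) ∪ {s}) = A ⊔ Subgroup.zpowers s := by
      rw [Subgroup.closure_union, Subgroup.closure_eq, Subgroup.zpowers_eq_closure]
    rw [h1]
    refine hmax.2 _ (lt_of_le_of_ne le_sup_left fun h => hs ?_)
    rw [h]
    have h2 : Subgroup.zpowers s ≤ A ⊔ Subgroup.zpowers s := le_sup_right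
    exact h2 (Subgroup.mem_zpowers s)
  -- class ≥ 3, so G is not abelian
  have hnote : ¬ (∀ x y : G, Commute x y) := by
    intro hcomm
    have hbot : Subgroup.lowerCentralSeries (⊤ : Subgroup G) 1 = ⊥ := by
      rw [Subgroup.top_lowerCentralSeries_one, _root_.commutator_def, eq_bot_iff, Subgroup.commutator_le]
      intro g _ h _
      exact Subgroup.mem_bot.mpr (commutatorElement_eq_one_iff_commute.mpr (hcomm g h))
    have := Subgroup.lowerCentralSeries_eq_bot_iff_nilpotencyClass_le.mp hbot
    omega
  -- center ≤ A
  have hZA : Subgroup.center G ≤ A := by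
    intro z hz
    by_contra hzA
    apply hnote
    apply comm_of_gen (hgen z hzA)
    rintro a ha b hb
    rcases ha with ha | ha
    · rcases hb with hb | hb
      · exact Subgroup.mul_comm_of_mem_isMulCommutative A ha hb
      · rw [Set.mem_singleton_iff] at hb; subst hb
        exact Subgroup.mem_center_iff.mp hz a
    · rw [Set.mem_singleton_iff] at ha; subst ha
      exact (Subgroup.mem_center_iff.mp hz b).symm
  -- center is a nontrivial p-group
  have hZnt : Nontrivial (Subgroup.center G) := hpG.center_nontrivial
  have hZp : p ≤ Nat.card (Subgroup.center G) := by
    obtain ⟨z, hz⟩ := (IsPGroup.iff_card.mp (hpG.to_subgroup (Subgroup.center G)))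
    rw [hz]
    have : z ≠ 0 := by
      rintro rfl
      rw [pow_zero] at hz
      exact (Finite.one_lt_card_iff_nontrivial.mpr hZnt).ne' hz
    calc p = p ^ 1 := (pow_one p).symm
      _ ≤ p ^ z := Nat.pow_le_pow_right (by omega) (by omega)
  -- every subgroup has p-power order
  have hppow : ∀ H : Subgroup G, ∃ a, Nat.card H = p ^ a := by
    intro H
    obtain ⟨a, _, ha⟩ := (Nat.dvd_prime_pow hp).mp (hG ▸ Subgroup.card_subgroup_dvd_card H)
    exact ⟨a, ha⟩
  -- stabilization of the lower central series
  have hstab : ∀ k, Subgroup.lowerCentralSeries (⊤ : Subgroup G) (k + 1) = Subgroup.lowerCentralSeries (⊤ : Subgroup G) k →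
      ∀ j, Subgroup.lowerCentralSeries (⊤ : Subgroup G) (k + j) = Subgroup.lowerCentralSeries (⊤ : Subgroup G) k := by
    intro k hk j
    induction j with
    | zero => rfl
    | succ j ih =>
      calc Subgroup.lowerCentralSeries (⊤ : Subgroup G) (k + j + 1) = ⁅Subgroup.lowerCentralSeries (⊤ : Subgroup G) (k + j), ⊤⁆ :=
            Subgroup.lowerCentralSeries_succ _ _
        _ = ⁅Subgroup.lowerCentralSeries (⊤ : Subgroup G) k, ⊤⁆ := by rw [ih]
        _ = Subgroup.lowerCentralSeries (⊤ : Subgroup G) (k + 1) := (Subgroup.lowerCentralSeries_succ _ _).symm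
        _ = Subgroup.lowerCentralSeries (⊤ : Subgroup G) k := hk
  have hstrict : ∀ k, k + 1 ≤ m - 1 →
      Subgroup.lowerCentralSeries (⊤ : Subgroup G) (k + 1) < Subgroup.lowerCentralSeries (⊤ : Subgroup G) k := by
    intro k hk
    refine lt_of_le_of_ne (Subgroup.lowerCentralSeries_antitone _ (Nat.le_succ k)) ?_
    intro heq
    have h2 := hstab k heq (m - 1 - k)
    rw [show k + (m - 1 - k) = m - 1 by omega] at h2
    have h3 : Subgroup.lowerCentralSeries (⊤ : Subgroup G) (m - 1) = ⊥ := by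
      rw [← hclass]; exact Subgroup.lowerCentralSeries_nilpotencyClass
    have h4 : Group.nilpotencyClass G ≤ k :=
      Subgroup.lowerCentralSeries_eq_bot_iff_nilpotencyClass_le.mp (h2.symm.trans h3)
    omega
  -- divisibility along the series
  have hdvd : ∀ t, t ≤ m - 2 → p ^ t ∣ Nat.card (Subgroup.lowerCentralSeries (⊤ : Subgroup G) (m - 1 - t)) := by
    intro t
    induction t with
    | zero => intro _; exact one_dvd _
    | succ t ih =>
      intro ht
      have h1 := ih (by omega)
      have hkk : m - 1 - t = (m - 1 - (t + 1)) + 1 := by omega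
      set k := m - 1 - (t + 1) with hkdef
      rw [hkk] at h1
      have hlt := hstrict k (by omega)
      obtain ⟨a, ha⟩ := hppow (Subgroup.lowerCentralSeries (⊤ : Subgroup G) (k + 1))
      obtain ⟨b, hb⟩ := hppow (Subgroup.lowerCentralSeries (⊤ : Subgroup G) k)
      have hdv : Nat.card (Subgroup.lowerCentralSeries (⊤ : Subgroup G) (k + 1)) ∣ Nat.card (Subgroup.lowerCentralSeries (⊤ : Subgroup G) k) :=
        Subgroup.card_dvd_of_le hlt.le
      have hne : Nat.card (Subgroup.lowerCentralSeries (⊤ : Subgroup G) (k + 1)) ≠ Nat.card (Subgroup.lowerCentralSeries (⊤ : Subgroup G) k) := by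
        intro h
        exact hlt.ne (Subgroup.eq_of_le_of_card_ge hlt.le h.ge)
      rw [ha, hb] at hdv
      rw [ha, hb] at hne
      rw [ha] at h1
      rw [hb]
      have hab : a ≤ b := (Nat.pow_dvd_pow_iff_le_right hp.one_lt).mp hdv
      have hta : t ≤ a := (Nat.pow_dvd_pow_iff_le_right hp.one_lt).mp h1
      have htb : t + 1 ≤ b := by
        rcases Nat.lt_or_ge a b with h | h
        · omega
        · exact absurd (by omega : a = b) (fun hx => hne (by rw [hx]))
      exact pow_dvd_pow p htb
  have hKdvd : p ^ (m - 2) ∣ Nat.card (_root_.commutator G) := by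
    have h1 := hdvd (m - 2) le_rfl
    rw [show m - 1 - (m - 2) = 1 by omega, Subgroup.top_lowerCentralSeries_one] at h1
    exact h1
  -- the key homomorphism for s ∉ A
  have key : ∀ s : G, s ∉ A →
      Nat.card (Subgroup.centralizer ({s} : Set G) ⊓ A : Subgroup G) *
        Nat.card (_root_.commutator G) = p ^ (m - 1) := by
    intro s hs
    have hconj : ∀ a : G, a ∈ A → s⁻¹ * a * s ∈ A := by
      intro a ha
      simpa using hnorm.conj_mem a ha s⁻¹
    set f : A → G := fun a => s⁻¹ * a * s * (a : G)⁻¹ with hfdef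
    have hfA : ∀ a : A, f a ∈ A := fun a => A.mul_mem (hconj a a.2) (A.inv_mem a.2)
    have hmul : ∀ a b : A, f (a * b) = f a * f b := by
      intro a b
      have hc : ((a : G))⁻¹ * (s⁻¹ * b * s * (b : G)⁻¹)
          = (s⁻¹ * b * s * (b : G)⁻¹) * ((a : G))⁻¹ :=
        Subgroup.mul_comm_of_mem_isMulCommutative A (A.inv_mem a.2) (hfA b)
      show s⁻¹ * (↑a * ↑b) * s * (↑a * ↑b : G)⁻¹
          = (s⁻¹ * ↑a * s * (↑a : G)⁻¹) * (s⁻¹ * ↑b * s * (↑b : G)⁻¹)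
      calc s⁻¹ * (↑a * ↑b) * s * (↑a * ↑b : G)⁻¹
          = (s⁻¹ * ↑a * s) * ((s⁻¹ * ↑b * s * (↑b : G)⁻¹) * (↑a : G)⁻¹) := by group
        _ = (s⁻¹ * ↑a * s) * ((↑a : G)⁻¹ * (s⁻¹ * ↑b * s * (↑b : G)⁻¹)) := by rw [← hc]
        _ = (s⁻¹ * ↑a * s * (↑a : G)⁻¹) * (s⁻¹ * ↑b * s * (↑b : G)⁻¹) := by group
    set ψ : A →* G := MonoidHom.mk' f hmul with hψdef
    have hmemR : ∀ a : A, f a ∈ ψ.range := fun a => ⟨a, rfl⟩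
    have hRA : ψ.range ≤ A := by
      rintro x ⟨a, rfl⟩
      exact hfA a
    have hr1 : ψ.range ≤ _root_.commutator G := by
      rintro x ⟨a, rfl⟩
      have hfc : ψ a = ⁅s⁻¹, (a : G)⁆ := by
        show s⁻¹ * a * s * (a : G)⁻¹ = s⁻¹ * a * s⁻¹⁻¹ * (a : G)⁻¹
        rw [inv_inv]
      rw [hfc, _root_.commutator_def]
      exact Subgroup.commutator_mem_commutator (Subgroup.mem_top _) (Subgroup.mem_top _)
    -- conjugation stability of the range
    have hconjR : ∀ x ∈ ψ.range, s⁻¹ * x * s ∈ ψ.range := by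
      intro x hx
      have hxA : x ∈ A := hRA hx
      have : s⁻¹ * x * s = f ⟨x, hxA⟩ * x := by
        show s⁻¹ * x * s = s⁻¹ * x * s * x⁻¹ * x
        group
      rw [this]
      exact ψ.range.mul_mem (hmemR _) hx
    have hconjR' : ∀ x ∈ ψ.range, s * x * s⁻¹ ∈ ψ.range := by
      intro x hx
      have hxA : x ∈ A := hRA hx
      have hdA : s * x * s⁻¹ ∈ A := by simpa using hnorm.conj_mem x hxA s
      have : s * x * s⁻¹ = (f ⟨s * x * s⁻¹, hdA⟩)⁻¹ * x := by
        show s * x * s⁻¹ = (s⁻¹ * (s * x * s⁻¹) * s * (s * x * s⁻¹)⁻¹)⁻¹ * x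
        group
      rw [this]
      exact ψ.range.mul_mem (ψ.range.inv_mem (hmemR _)) hx
    have hnormR : ψ.range.Normal := by
      rw [← Subgroup.normalizer_eq_top_iff, eq_top_iff, ← hgen s hs, Subgroup.closure_le]
      rintro g (hg | hg)
      · rw [SetLike.mem_coe, Subgroup.mem_normalizer_iff]
        intro h
        constructor
        · intro hh
          have hcm : g * h = h * g :=
            Subgroup.mul_comm_of_mem_isMulCommutative A hg (hRA hh)
          have : g * h * g⁻¹ = h := by rw [hcm]; group
          rwa [this]
        · intro hh
          have hcm : g * (g * h * g⁻¹) = (g * h * g⁻¹) * g :=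
            Subgroup.mul_comm_of_mem_isMulCommutative A hg (hRA hh)
          have h2 : h = g⁻¹ * ((g * h * g⁻¹) * g) := by group
          rw [← hcm] at h2
          have h3 : g⁻¹ * (g * (g * h * g⁻¹)) = g * h * g⁻¹ := by group
          rw [show h = g * h * g⁻¹ from h2.trans h3]
          exact hh
      · rw [Set.mem_singleton_iff] at hg
        rw [hg, SetLike.mem_coe, Subgroup.mem_normalizer_iff]
        intro h
        constructor
        · intro hh
          exact hconjR' h hh
        · intro hh
          have h2 := hconjR _ hh
          have h3 : s⁻¹ * (s * h * s⁻¹) * s = h := by group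
          rwa [h3] at h2
    -- the quotient by the range is commutative
    haveI := hnormR
    letI : CommGroup (G ⧸ ψ.range) :=
      { (inferInstance : Group (G ⧸ ψ.range)) with
        mul_comm := by
          intro x y
          have hsurj : Function.Surjective (QuotientGroup.mk' ψ.range) :=
            QuotientGroup.mk'_surjective _
          have hcl : Subgroup.closure
              ((QuotientGroup.mk' ψ.range) '' ((A : Set G) ∪ {s})) = ⊤ := by
            rw [← MonoidHom.map_closure, hgen s hs, ← MonoidHom.range_eq_map]
            exact MonoidHom.range_eq_top.mpr hsurj
          refine comm_of_gen hcl ?_ x y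
          rintro a ⟨a0, ha0, rfl⟩ b ⟨b0, hb0, rfl⟩
          rcases ha0 with ha0 | ha0
          · rcases hb0 with hb0 | hb0
            · exact Commute.map
                (Subgroup.mul_comm_of_mem_isMulCommutative A ha0 hb0 :
                  Commute a0 b0) (QuotientGroup.mk' ψ.range)
            · rw [Set.mem_singleton_iff] at hb0; subst hb0
              have hfc : ⁅b0⁻¹, a0⁆ ∈ ψ.range := by
                have : ⁅b0⁻¹, a0⁆ = f ⟨a0, ha0⟩ := by
                  show b0⁻¹ * a0 * b0⁻¹⁻¹ * a0⁻¹ = b0⁻¹ * a0 * b0 * a0⁻¹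
                  rw [inv_inv]
                rw [this]
                exact hmemR _
              have h1 : ⁅(QuotientGroup.mk' ψ.range) b0⁻¹,
                  (QuotientGroup.mk' ψ.range) a0⁆ = 1 := by
                rw [← map_commutatorElement]
                rw [← QuotientGroup.ker_mk' ψ.range, MonoidHom.mem_ker] at hfc
                exact hfc
              have h2 := commutatorElement_eq_one_iff_commute.mp h1
              rw [map_inv] at h2
              exact (Commute.inv_left_iff.mp h2).symm
          · rw [Set.mem_singleton_iff] at ha0; subst ha0
            rcases hb0 with hb0 | hb0
            · have hfc : ⁅a0⁻¹, b0⁆ ∈ ψ.range := by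
                have : ⁅a0⁻¹, b0⁆ = f ⟨b0, hb0⟩ := by
                  show a0⁻¹ * b0 * a0⁻¹⁻¹ * b0⁻¹ = a0⁻¹ * b0 * a0 * b0⁻¹
                  rw [inv_inv]
                rw [this]
                exact hmemR _
              have h1 : ⁅(QuotientGroup.mk' ψ.range) a0⁻¹,
                  (QuotientGroup.mk' ψ.range) b0⁆ = 1 := by
                rw [← map_commutatorElement]
                rw [← QuotientGroup.ker_mk' ψ.range, MonoidHom.mem_ker] at hfc
                exact hfc
              have h2 := commutatorElement_eq_one_iff_commute.mp h1
              rw [map_inv] at h2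
              exact Commute.inv_left_iff.mp h2
            · rw [Set.mem_singleton_iff] at hb0; subst hb0
              exact Commute.refl _ }
    have hr2 : _root_.commutator G ≤ ψ.range := by
      have := Abelianization.commutator_subset_ker (QuotientGroup.mk' ψ.range)
      rwa [QuotientGroup.ker_mk'] at this
    have hR : ψ.range = _root_.commutator G := le_antisymm hr1 hr2
    -- kernel is the centralizer intersected with A
    have hker : ψ.ker = (Subgroup.centralizer ({s} : Set G)).subgroupOf A := by
      ext a
      rw [MonoidHom.mem_ker, Subgroup.mem_subgroupOf,
        Subgroup.mem_centralizer_singleton_iff]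
      constructor
      · intro h
        have h1 : s⁻¹ * a * s = (a : G) := by
          have := mul_inv_eq_one.mp h
          exact this
        calc (a : G) * s = s * (s⁻¹ * a * s) := by group
          _ = s * a := by rw [h1]
      · intro h
        show s⁻¹ * a * s * (a : G)⁻¹ = 1
        calc s⁻¹ * (a : G) * s * (a : G)⁻¹ = s⁻¹ * ((a : G) * s) * (a : G)⁻¹ := by group
          _ = s⁻¹ * (s * a) * (a : G)⁻¹ := by rw [h]
          _ = 1 := by group
    -- counting
    have hsplit : Nat.card A = Nat.card (A ⧸ ψ.ker) * Nat.card ψ.ker :=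
      Subgroup.card_eq_card_quotient_mul_card_subgroup ψ.ker
    have hquot : Nat.card (A ⧸ ψ.ker) = Nat.card (_root_.commutator G) := by
      rw [Nat.card_congr (QuotientGroup.quotientKerEquivRange ψ).toEquiv, hR]
    have hkc : Nat.card ψ.ker
        = Nat.card (Subgroup.centralizer ({s} : Set G) ⊓ A : Subgroup G) := by
      rw [hker, ← Subgroup.inf_subgroupOf_right]
      exact Nat.card_congr (Subgroup.subgroupOfEquivOfLe inf_le_right).toEquiv
    rw [hquot, hkc, hAcard] at hsplit
    rw [mul_comm] at hsplit
    exact hsplit.symm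
  -- exists element outside A
  have hex : ∃ s : G, s ∉ A := by
    by_contra h
    push_neg at h
    exact hAne (Subgroup.eq_top_iff' A |>.mpr h)
  obtain ⟨s₀, hs₀⟩ := hex
  obtain ⟨b, hb⟩ := hppow (_root_.commutator G)
  have hbge : m - 2 ≤ b := (Nat.pow_dvd_pow_iff_le_right hp.one_lt).mp (hb ▸ hKdvd)
  have hkey0 := key s₀ hs₀
  rw [hb] at hkey0
  set Q0 := Subgroup.centralizer ({s₀} : Set G) ⊓ A with hQ0
  have hZQ0 : Subgroup.center G ≤ Q0 :=
    le_inf (Subgroup.center_le_centralizer _) hZA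
  have hQ0ge : p ≤ Nat.card Q0 := le_trans hZp (Subgroup.card_le_of_le hZQ0)
  obtain ⟨q, hq⟩ := hppow Q0
  rw [hq] at hkey0 hQ0ge
  have hqb : q + b = m - 1 := by
    rw [← pow_add] at hkey0
    exact Nat.pow_right_injective hp.two_le hkey0
  have hq1 : 1 ≤ q :=
    (Nat.pow_le_pow_iff_right hp.one_lt).mp (by rw [pow_one]; exact hQ0ge)
  have hbe : b = m - 2 := by omega
  have hqe : q = 1 := by omega
  have hZcard : Nat.card (Subgroup.center G) = p := by
    have hle : Nat.card (Subgroup.center G) ≤ p := by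
      have h2 := Subgroup.card_le_of_le hZQ0
      rw [hq, hqe, pow_one] at h2
      exact h2
    omega
  have hKcard : Nat.card (_root_.commutator G) = p ^ (m - 2) := by rw [hb, hbe]
  -- centralizer of an element outside A
  have hout : ∀ s : G, s ∉ A → Nat.card (Subgroup.centralizer ({s} : Set G)) = p ^ 2 := by
    intro s hs
    have hkeys := key s hs
    rw [hKcard] at hkeys
    have hQA : Nat.card (Subgroup.centralizer ({s} : Set G) ⊓ A : Subgroup G) = p := by
      obtain ⟨q', hq'⟩ := hppow (Subgroup.centralizer ({s} : Set G) ⊓ A)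
      rw [hq', ← pow_add] at hkeys
      have h3 := Nat.pow_right_injective hp.two_le hkeys
      have h4 : q' = 1 := by omega
      rw [hq', h4, pow_one]
    set C := Subgroup.centralizer ({s} : Set G) with hC
    have hsC : s ∈ C := Subgroup.mem_centralizer_singleton_iff.mpr rfl
    haveI : A.Normal := hnorm
    have hrel : A.relIndex C = p := by
      have hdv : A.relIndex C ∣ p := hAi ▸ Subgroup.relIndex_dvd_index_of_normal A C
      rcases (Nat.dvd_prime hp).mp hdv with h | h
      · exact absurd (Subgroup.relIndex_eq_one.mp h hsC) hs
      · exact h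
    have hsub : Nat.card (A.subgroupOf C) * A.relIndex C = Nat.card C :=
      Subgroup.card_mul_index (A.subgroupOf C)
    have hcardsub : Nat.card (A.subgroupOf C) = Nat.card (A ⊓ C : Subgroup G) := by
      rw [← Subgroup.inf_subgroupOf_right]
      exact Nat.card_congr (Subgroup.subgroupOfEquivOfLe inf_le_right).toEquiv
    rw [hcardsub, hrel, inf_comm, hQA] at hsub
    rw [← hsub, sq]
  -- centralizer of a noncentral element of A
  have hin : ∀ a : G, a ∈ A → a ∉ Subgroup.center G →
      Nat.card (Subgroup.centralizer ({a} : Set G)) = p ^ (m - 1) := by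
    intro a ha haZ
    have hA_le : A ≤ Subgroup.centralizer ({a} : Set G) := by
      intro x hx
      exact Subgroup.mem_centralizer_singleton_iff.mpr
        (Subgroup.mul_comm_of_mem_isMulCommutative A hx ha)
    have hne : Subgroup.centralizer ({a} : Set G) ≠ ⊤ := by
      intro h
      exact haZ (Subgroup.centralizer_eq_top_iff_subset.mp h rfl)
    rcases eq_or_lt_of_le hA_le with h | h
    · rw [← h]; exact hAcard
    · exact absurd (hmax.2 _ h) hne
  exact ⟨hZcard, hZA, hin, hout⟩

end Struct



open MulAction in
lemma burnside_simul (G : Type*) [Group G] [Fintype G] (n : ℕ) :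
    (∑ u : G, Nat.card (Subgroup.centralizer ({u} : Set G)) ^ n)
      = alphaCount G n * Fintype.card G := by
  classical
  letI : ∀ a : ConjAct G, Fintype (fixedBy (Fin n → G) a) := fun a => Fintype.ofFinite _
  letI : Fintype (Quotient (orbitRel (ConjAct G) (Fin n → G))) := Fintype.ofFinite _
  have key := MulAction.sum_card_fixedBy_eq_card_orbits_mul_card_group (ConjAct G) (Fin n → G)
  have h1 : alphaCount G n = Fintype.card (Quotient (orbitRel (ConjAct G) (Fin n → G))) := by
    rw [← Nat.card_eq_fintype_card]
    apply Nat.card_congr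
    apply Quot.congrRight
    intro x y
    show simulConjRel G n x y ↔ x ∈ orbit (ConjAct G) y
    rw [mem_orbit_iff]
    constructor
    · rintro ⟨g, hg⟩
      refine ⟨(ConjAct.toConjAct g)⁻¹, funext fun i => ?_⟩
      have := hg i
      simp only [Pi.smul_apply, ConjAct.smul_def, map_inv, ConjAct.ofConjAct_toConjAct, inv_inv]
      rw [← this]; group
    · rintro ⟨c, hc⟩
      refine ⟨(ConjAct.ofConjAct c)⁻¹, fun i => ?_⟩
      have : c • y i = x i := congrFun hc i
      rw [ConjAct.smul_def] at this
      rw [← this]; group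
  have h2 : ∀ u : G, Fintype.card (fixedBy (Fin n → G) (ConjAct.toConjAct u))
      = Nat.card (Subgroup.centralizer ({u} : Set G)) ^ n := by
    intro u
    have e : fixedBy (Fin n → G) (ConjAct.toConjAct u)
        ≃ (Fin n → (Subgroup.centralizer ({u} : Set G))) :=
      { toFun := fun x i => ⟨x.1 i, by
          rw [Subgroup.mem_centralizer_singleton_iff]
          have : (ConjAct.toConjAct u • x.1) i = x.1 i := congrFun x.2 i
          rw [Pi.smul_apply, ConjAct.smul_def, ConjAct.ofConjAct_toConjAct] at this
          exact (mul_inv_eq_iff_eq_mul.mp this).symm⟩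
        invFun := fun f => ⟨fun i => (f i : G), by
          funext i
          rw [Pi.smul_apply, ConjAct.smul_def, ConjAct.ofConjAct_toConjAct]
          have := (Subgroup.mem_centralizer_singleton_iff).mp (f i).2
          rw [← this]; group⟩
        left_inv := fun x => rfl
        right_inv := fun f => rfl }
    rw [Fintype.card_congr e, ← Nat.card_eq_fintype_card, Nat.card_fun]
    simp
  have hccard : Fintype.card (ConjAct G) = Fintype.card G :=
    Fintype.card_congr ConjAct.ofConjAct.toEquiv
  rw [h1, ← hccard, ← key]
  rw [← Equiv.sum_comp (ConjAct.toConjAct (G := G)).toEquiv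
    (fun a => Fintype.card (fixedBy (Fin n → G) a))]
  exact (Finset.sum_congr rfl fun u _ => (h2 u)).symm


theorem stmt_10 (p m : ℕ) [Fact p.Prime] (G : Type*) [Group G] [Finite G]
    [Group.IsNilpotent G]
    (hG : Nat.card G = p ^ m) (hm : 4 ≤ m)
    (hclass : Group.nilpotencyClass G = m - 1)
    (P1 : Subgroup G)
    (hP1 : ∀ g : G, g ∈ P1 ↔
      ∀ x ∈ Subgroup.lowerCentralSeries (⊤ : Subgroup G) 1, x⁻¹ * g⁻¹ * x * g ∈ Subgroup.lowerCentralSeries (⊤ : Subgroup G) 3)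
    (hpos : ∀ i j : ℕ, 1 ≤ i → 1 ≤ j →
      ⁅maximalClassP G P1 i, maximalClassP G P1 j⁆ ≤ maximalClassP G P1 (i + j + 1))
    (hab : ∃ A : Subgroup G, A.index = p ∧ IsMulCommutative A) :
    ∀ n : ℕ,
      (alphaCount G n : ℚ) =
        (1 / (p : ℚ) ^ m) *
          ((p : ℚ) * (p : ℚ) ^ (m * n) +
            ((p : ℚ) ^ m - (p : ℚ) ^ (m - 1)) * (p : ℚ) ^ (2 * n) +
            ((p : ℚ) ^ (m - 1) - (p : ℚ)) * (p : ℚ) ^ ((m - 1) * n)) := by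
  classical
  obtain ⟨A, hAi, hAc⟩ := hab
  obtain ⟨hZcard, hZA, hin, hout⟩ := centralizer_cards hG hm hclass hAi hAc
  intro n
  letI : Fintype G := Fintype.ofFinite G
  have hp : p.Prime := Fact.out
  have hp1 : 1 < p := hp.one_lt
  have hAcard : Nat.card A = p ^ (m - 1) := by
    have h1 : Nat.card A * A.index = Nat.card G := Subgroup.card_mul_index A
    rw [hAi, hG] at h1
    have h2 : p ^ m = p ^ (m - 1) * p := by
      rw [← pow_succ]; congr 1; omega
    rw [h2] at h1
    exact Nat.eq_of_mul_eq_mul_right (by omega) h1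
  have hfc : Fintype.card G = p ^ m := by rw [← Nat.card_eq_fintype_card, hG]
  -- the three filters
  have hcZ : (Finset.univ.filter (fun u : G => u ∈ Subgroup.center G)).card = p := by
    rw [← Fintype.card_subtype, ← Nat.card_eq_fintype_card]
    exact hZcard
  have hcA : (Finset.univ.filter (fun u : G => u ∈ A)).card = p ^ (m - 1) := by
    rw [← Fintype.card_subtype, ← Nat.card_eq_fintype_card]
    exact hAcard
  have e1 : (Finset.univ.filter (fun u : G => u ∈ A)).filter
      (fun u => u ∈ Subgroup.center G)
      = Finset.univ.filter (fun u : G => u ∈ Subgroup.center G) := by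
    ext u
    simp only [Finset.mem_filter, Finset.mem_univ, true_and]
    exact ⟨fun h => h.2, fun h => ⟨hZA h, h⟩⟩
  have hcAZ : ((Finset.univ.filter (fun u : G => u ∈ A)).filter
      (fun u => u ∉ Subgroup.center G)).card = p ^ (m - 1) - p := by
    have h1 := Finset.card_filter_add_card_filter_not
      (s := Finset.univ.filter (fun u : G => u ∈ A))
      (p := fun u => u ∈ Subgroup.center G)
    rw [e1, hcZ, hcA] at h1
    omega
  have hcnA : (Finset.univ.filter (fun u : G => u ∉ A)).card = p ^ m - p ^ (m - 1) := by
    have h1 := Finset.card_filter_add_card_filter_not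
      (s := (Finset.univ : Finset G)) (p := fun u : G => u ∈ A)
    rw [hcA, Finset.card_univ, hfc] at h1
    omega
  -- the sum of centralizer powers
  have hsum : (∑ u : G, Nat.card (Subgroup.centralizer ({u} : Set G)) ^ n)
      = p * p ^ (m * n) + (p ^ (m - 1) - p) * p ^ ((m - 1) * n)
        + (p ^ m - p ^ (m - 1)) * p ^ (2 * n) := by
    rw [← Finset.sum_filter_add_sum_filter_not Finset.univ (fun u : G => u ∈ A)]
    rw [← Finset.sum_filter_add_sum_filter_not
      (Finset.univ.filter (fun u : G => u ∈ A)) (fun u => u ∈ Subgroup.center G)]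
    have hs1 : ∑ u ∈ (Finset.univ.filter (fun u : G => u ∈ A)).filter
        (fun u => u ∈ Subgroup.center G),
        Nat.card (Subgroup.centralizer ({u} : Set G)) ^ n = p * p ^ (m * n) := by
      rw [e1]
      rw [Finset.sum_congr rfl (fun u hu => ?_), Finset.sum_const, hcZ, smul_eq_mul]
      have hu' : u ∈ Subgroup.center G := by
        simpa using (Finset.mem_filter.mp hu).2
      have : Subgroup.centralizer ({u} : Set G) = ⊤ :=
        Subgroup.centralizer_eq_top_iff_subset.mpr
          (Set.singleton_subset_iff.mpr hu')
      rw [this, Subgroup.card_top, hG, ← pow_mul]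
    have hs2 : ∑ u ∈ (Finset.univ.filter (fun u : G => u ∈ A)).filter
        (fun u => u ∉ Subgroup.center G),
        Nat.card (Subgroup.centralizer ({u} : Set G)) ^ n
        = (p ^ (m - 1) - p) * p ^ ((m - 1) * n) := by
      rw [Finset.sum_congr rfl (fun u hu => ?_), Finset.sum_const, hcAZ, smul_eq_mul]
      have hu1 := Finset.mem_filter.mp hu
      have hu2 := Finset.mem_filter.mp hu1.1
      rw [hin u (by simpa using hu2.2) hu1.2, ← pow_mul]
    have hs3 : ∑ u ∈ Finset.univ.filter (fun u : G => u ∉ A),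
        Nat.card (Subgroup.centralizer ({u} : Set G)) ^ n
        = (p ^ m - p ^ (m - 1)) * p ^ (2 * n) := by
      rw [Finset.sum_congr rfl (fun u hu => ?_), Finset.sum_const, hcnA, smul_eq_mul]
      have hu1 := Finset.mem_filter.mp hu
      rw [hout u hu1.2, ← pow_mul]
    rw [hs1, hs2, hs3]
  have hburn := burnside_simul G n
  rw [hsum, hfc] at hburn
  -- cast to ℚ
  have h1 : p ≤ p ^ (m - 1) := by
    calc p = p ^ 1 := (pow_one p).symm
      _ ≤ p ^ (m - 1) := Nat.pow_le_pow_right (by omega) (by omega)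
  have h2 : p ^ (m - 1) ≤ p ^ m := Nat.pow_le_pow_right (by omega) (by omega)
  have hQ := congrArg (Nat.cast : ℕ → ℚ) hburn
  push_cast [Nat.cast_sub h1, Nat.cast_sub h2] at hQ
  have hp0 : ((p : ℚ)) ^ m ≠ 0 := by
    apply pow_ne_zero
    exact_mod_cast hp.pos.ne'
  rw [one_div, inv_mul_eq_div, eq_div_iff hp0, ← hQ]
  ring
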